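/- The number of edges of the edge polytope of the complete bipartite graph K_{m,n} (with m,n ≥ 1 and m+n ≥ 3) equals mn(m+n-2)/2. -/

import Mathlib

open Finset SimpleGraph

/-- A 4-cycle exists within the vertex set `s` of the graph `G`. -/
def fourCycleOn {V : Type*} (G : SimpleGraph V) (s : Set V) : Prop :=
  ∃ a b c d, a ∈ s ∧ b ∈ s ∧ c ∈ s ∧ d ∈ s ∧
    a ≠ b ∧ a ≠ c ∧ a ≠ d ∧ b ≠ c ∧ b ≠ d ∧ c ≠ d ∧
    G.Adj a b ∧ G.Adj b c ∧ G.Adj c d ∧ G.Adj d a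

/-- The pair of edges `{e,f}` spans an edge of the edge polytope: they share a
vertex, or they are disjoint and the induced subgraph on their endpoints has no 4-cycle. -/
def epPair {V : Type*} (G : SimpleGraph V) (e f : Sym2 V) : Prop :=
  (∃ v, v ∈ e ∧ v ∈ f) ∨
  ((¬ ∃ v, v ∈ e ∧ v ∈ f) ∧ ¬ fourCycleOn G {v | v ∈ e ∨ v ∈ f})

open scoped Classical in
/-- The number of edges (1-dimensional faces) of the edge polytope of `G`:
the number of unordered pairs of distinct edges satisfying `epPair`. -/
noncomputable def epsilon {V : Type*} [Fintype V] (G : SimpleGraph V) : ℕ :=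
  ((G.edgeFinset.powersetCard 2).filter
    (fun s => ∀ e ∈ s, ∀ f ∈ s, e ≠ f → epPair G e f)).card

open scoped Classical in
/-- number of 4-subsets inducing a path of length 3. -/
noncomputable def aCount {V : Type*} [Fintype V] (H : SimpleGraph V) : ℕ :=
  ((univ.powersetCard 4).filter (fun s => ∃ a b c d : V,
    s = {a, b, c, d} ∧ a ≠ b ∧ a ≠ c ∧ a ≠ d ∧ b ≠ c ∧ b ≠ d ∧ c ≠ d ∧
    H.Adj a b ∧ H.Adj b c ∧ H.Adj c d ∧ ¬H.Adj a c ∧ ¬H.Adj a d ∧ ¬H.Adj b d)).card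

open scoped Classical in
/-- number of 4-subsets inducing a cycle of length 4. -/
noncomputable def bCount {V : Type*} [Fintype V] (H : SimpleGraph V) : ℕ :=
  ((univ.powersetCard 4).filter (fun s => ∃ a b c d : V,
    s = {a, b, c, d} ∧ a ≠ b ∧ a ≠ c ∧ a ≠ d ∧ b ≠ c ∧ b ≠ d ∧ c ≠ d ∧
    H.Adj a b ∧ H.Adj b c ∧ H.Adj c d ∧ H.Adj d a ∧ ¬H.Adj a c ∧ ¬H.Adj b d)).card

open scoped Classical in
/-- number of 4-subsets inducing a path of length 2 plus an isolated vertex. -/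
noncomputable def cCount {V : Type*} [Fintype V] (H : SimpleGraph V) : ℕ :=
  ((univ.powersetCard 4).filter (fun s => ∃ a b c d : V,
    s = {a, b, c, d} ∧ a ≠ b ∧ a ≠ c ∧ a ≠ d ∧ b ≠ c ∧ b ≠ d ∧ c ≠ d ∧
    H.Adj a b ∧ H.Adj b c ∧ ¬H.Adj a c ∧ ¬H.Adj a d ∧ ¬H.Adj b d ∧ ¬H.Adj c d)).card

open scoped Classical in
/-- the number of triangles of `H`. -/
noncomputable def k3 {V : Type*} [Fintype V] (H : SimpleGraph V) : ℕ :=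
  ((univ.powersetCard 3).filter (fun s => ∀ i ∈ s, ∀ j ∈ s, i ≠ j → H.Adj i j)).card

open scoped Classical in
/-- the number of 3-subsets inducing a path with exactly two edges. -/
noncomputable def psi {V : Type*} [Fintype V] (H : SimpleGraph V) : ℕ :=
  ((univ.powersetCard 3).filter (fun s => ∃ a b c : V,
    s = {a, b, c} ∧ a ≠ b ∧ a ≠ c ∧ b ≠ c ∧ H.Adj a b ∧ H.Adj b c ∧ ¬H.Adj a c)).card

/-- the complete bipartite graph `K_{m,n}` on the vertex set `[d]`, with parts
`{0,…,m-1}` and `{m,…,m+n-1}`. -/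
def bip (d m n : ℕ) : SimpleGraph (Fin d) where
  Adj i j := ((i : ℕ) < m ∧ m ≤ (j : ℕ) ∧ (j : ℕ) < m + n) ∨
    ((j : ℕ) < m ∧ m ≤ (i : ℕ) ∧ (i : ℕ) < m + n)
  symm := ⟨by intro i j h; tauto⟩
  loopless := ⟨by intro i h; omega⟩

/-- the copy of `H` on the first `r` vertices of `[d]`. -/
def embedGraph {r : ℕ} (H : SimpleGraph (Fin r)) (d : ℕ) : SimpleGraph (Fin d) where
  Adj i j := ∃ (hi : (i : ℕ) < r) (hj : (j : ℕ) < r), H.Adj ⟨i, hi⟩ ⟨j, hj⟩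
  symm := ⟨by rintro i j ⟨hi, hj, h⟩; exact ⟨hj, hi, h.symm⟩⟩
  loopless := ⟨by rintro i ⟨hi, hj, h⟩; exact H.ne_of_adj h rfl⟩

/-- the subgraph of `H` consisting of the edges in the connected component `c`. -/
def compGraph {V : Type*} (H : SimpleGraph V) (c : H.ConnectedComponent) :
    SimpleGraph V where
  Adj i j := H.Adj i j ∧ H.connectedComponentMk i = c
  symm := ⟨by
    rintro i j ⟨h, hc⟩
    exact ⟨h.symm, (SimpleGraph.ConnectedComponent.sound h.symm.reachable).trans hc⟩⟩
  loopless := ⟨by rintro i ⟨h, _⟩; exact H.ne_of_adj h rfl⟩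

open scoped Classical in
/-- `|X_{i,j}|`: the number of vertices (other than `i, j`) adjacent to `i` but not `j`. -/
noncomputable def cardX {V : Type*} [Fintype V] (H : SimpleGraph V) (i j : V) : ℕ :=
  (univ.filter (fun ℓ => ℓ ≠ i ∧ ℓ ≠ j ∧ H.Adj i ℓ ∧ ¬ H.Adj j ℓ)).card

/-!
In `K_{m,n}` two disjoint edges `a₁b₁`, `a₂b₂` always close up to the 4-cycle `a₁b₁a₂b₂`, so the
edges of the edge polytope are exactly the pairs of edges sharing a vertex. Two distinct edges
share at most one vertex, so these pairs are counted by `∑ᵥ C(deg v, 2)`, which for `K_{m,n}` is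
`m·C(n,2) + n·C(m,2) = mn(m+n-2)/2`.
-/

open scoped Classical

namespace SimpleGraph

variable {V : Type*} (G : SimpleGraph V)

theorem epPair_iff_of_fourCycleOn {e f : Sym2 V}
    (hcycle : (¬∃ v, v ∈ e ∧ v ∈ f) → fourCycleOn G {v | v ∈ e ∨ v ∈ f}) :
    epPair G e f ↔ ∃ v, v ∈ e ∧ v ∈ f :=
  ⟨fun h => h.elim id fun ⟨hdisj, hfree⟩ => (hfree (hcycle hdisj)).elim, Or.inl⟩

variable [Fintype V]

theorem filter_edgePairs_share_vertex_eq_biUnion :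
    {s ∈ G.edgeFinset.powersetCard 2 | ∀ e ∈ s, ∀ f ∈ s, e ≠ f → ∃ v, v ∈ e ∧ v ∈ f} =
      univ.biUnion fun v => (G.incidenceFinset v).powersetCard 2 := by
  ext s
  simp only [mem_filter, mem_powersetCard, mem_biUnion, mem_univ, true_and]
  constructor
  · rintro ⟨⟨hsub, hcard⟩, hshare⟩
    obtain ⟨e, f, hef, rfl⟩ := card_eq_two.mp hcard
    obtain ⟨v, hve, hvf⟩ := hshare e (by simp) f (by simp) hef
    refine ⟨v, ?_, card_pair hef⟩
    intro x hx
    rw [mem_incidenceFinset]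
    simp only [mem_insert, mem_singleton] at hx
    rcases hx with rfl | rfl
    · exact ⟨mem_edgeFinset.mp (hsub (by simp)), hve⟩
    · exact ⟨mem_edgeFinset.mp (hsub (by simp)), hvf⟩
  · rintro ⟨v, hsub, hcard⟩
    refine ⟨⟨hsub.trans (G.incidenceFinset_subset v), hcard⟩, fun e he f hf _ => ⟨v, ?_, ?_⟩⟩
    · exact ((G.mem_incidenceFinset v e).mp (hsub he)).2
    · exact ((G.mem_incidenceFinset v f).mp (hsub hf)).2

theorem pairwise_disjoint_powersetCard_two_incidenceFinset :
    Pairwise fun v w =>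
      Disjoint ((G.incidenceFinset v).powersetCard 2) ((G.incidenceFinset w).powersetCard 2) := by
  intro v w hvw
  rw [Finset.disjoint_left]
  intro s hsv hsw
  obtain ⟨hsv, hcard⟩ := mem_powersetCard.mp hsv
  obtain ⟨e, f, hef, rfl⟩ := card_eq_two.mp hcard
  have hsw := (mem_powersetCard.mp hsw).1
  have mem : ∀ {u x}, x ∈ ({e, f} : Finset _) → {e, f} ⊆ G.incidenceFinset u → u ∈ x :=
    fun hx hsub => ((G.mem_incidenceFinset _ _).mp (hsub hx)).2
  -- distinct vertices `v, w` lie on at most one common edge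
  exact hef (Sym2.eq_of_ne_mem hvw (mem (by simp) hsv) (mem (by simp) hsw)
    (mem (by simp) hsv) (mem (by simp) hsw))

theorem card_edgePairs_share_vertex :
    #{s ∈ G.edgeFinset.powersetCard 2 | ∀ e ∈ s, ∀ f ∈ s, e ≠ f → ∃ v, v ∈ e ∧ v ∈ f} =
      ∑ v, (G.degree v).choose 2 := by
  rw [filter_edgePairs_share_vertex_eq_biUnion,
    card_biUnion (G.pairwise_disjoint_powersetCard_two_incidenceFinset.set_pairwise _)]
  simp only [card_powersetCard, card_incidenceFinset_eq_degree]

theorem epsilon_eq_sum_degree_choose_two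
    (hcycle : ∀ e ∈ G.edgeSet, ∀ f ∈ G.edgeSet,
      (¬∃ v, v ∈ e ∧ v ∈ f) → fourCycleOn G {v | v ∈ e ∨ v ∈ f}) :
    epsilon G = ∑ v, (G.degree v).choose 2 := by
  rw [epsilon, ← card_edgePairs_share_vertex]
  refine congrArg card (filter_congr fun s hs => ?_)
  have hedge : ∀ e ∈ s, e ∈ G.edgeSet := fun e he =>
    mem_edgeFinset.mp ((mem_powersetCard.mp hs).1 he)
  refine forall₂_congr fun e he => forall₂_congr fun f hf => imp_congr_right fun _ => ?_
  exact G.epPair_iff_of_fourCycleOn (hcycle e (hedge e he) f (hedge f hf))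

end SimpleGraph

section completeBipartiteGraph

open SimpleGraph

variable {V W : Type*}

theorem fourCycleOn_completeBipartiteGraph {e f : Sym2 (V ⊕ W)}
    (he : e ∈ (completeBipartiteGraph V W).edgeSet)
    (hf : f ∈ (completeBipartiteGraph V W).edgeSet) (hdisj : ¬∃ v, v ∈ e ∧ v ∈ f) :
    fourCycleOn (completeBipartiteGraph V W) {v | v ∈ e ∨ v ∈ f} := by
  rw [edgeSet_completeBipartiteGraph] at he hf
  obtain ⟨⟨a, b⟩, rfl⟩ := he
  obtain ⟨⟨c, d⟩, rfl⟩ := hf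
  have hac : a ≠ c := by rintro rfl; exact hdisj ⟨.inl a, by simp⟩
  have hbd : b ≠ d := by rintro rfl; exact hdisj ⟨.inr b, by simp⟩
  refine ⟨.inl a, .inr b, .inl c, .inr d, ?_⟩
  simp [hac, hbd]

theorem degree_completeBipartiteGraph_inl [Fintype W] (v : V)
    [Fintype ((completeBipartiteGraph V W).neighborSet (.inl v))] :
    (completeBipartiteGraph V W).degree (.inl v) = Fintype.card W := by
  have : (completeBipartiteGraph V W).neighborFinset (.inl v) = univ.map .inr := by
    ext (_ | _) <;> simp
  rw [← card_neighborFinset_eq_degree, this, card_map, card_univ]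

theorem degree_completeBipartiteGraph_inr [Fintype V] (w : W)
    [Fintype ((completeBipartiteGraph V W).neighborSet (.inr w))] :
    (completeBipartiteGraph V W).degree (.inr w) = Fintype.card V := by
  have : (completeBipartiteGraph V W).neighborFinset (.inr w) = univ.map .inl := by
    ext (_ | _) <;> simp
  rw [← card_neighborFinset_eq_degree, this, card_map, card_univ]

theorem epsilon_completeBipartiteGraph [Fintype V] [Fintype W] :
    epsilon (completeBipartiteGraph V W) =
      Fintype.card V * (Fintype.card W).choose 2 + Fintype.card W * (Fintype.card V).choose 2 := by
  rw [epsilon_eq_sum_degree_choose_two _ fun e he f hf =>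
    fourCycleOn_completeBipartiteGraph he hf, Fintype.sum_sum_type]
  simp [degree_completeBipartiteGraph_inl, degree_completeBipartiteGraph_inr]

end completeBipartiteGraph

theorem Nat.two_mul_choose_two (n : ℕ) : 2 * n.choose 2 = n * (n - 1) := by
  rw [Nat.choose_two_right, Nat.mul_div_cancel' (Nat.even_mul_pred_self n).two_dvd]

theorem Nat.mul_choose_two_add_mul_choose_two (m n : ℕ) :
    m * n.choose 2 + n * m.choose 2 = m * n * (m + n - 2) / 2 := by
  refine (Nat.div_eq_of_eq_mul_left two_pos ?_).symm
  calc m * n * (m + n - 2) = m * (n * (n - 1)) + n * (m * (m - 1)) := by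
        rcases m with _ | m
        · simp
        rcases n with _ | n
        · simp
        rw [show m + 1 + (n + 1) - 2 = m + n by omega]
        simp only [Nat.add_sub_cancel]
        ring
    _ = (m * n.choose 2 + n * m.choose 2) * 2 := by
        rw [← Nat.two_mul_choose_two, ← Nat.two_mul_choose_two]
        ring

open scoped Classical in
theorem edge_count_complete_bipartite_general (m n : ℕ) :
    epsilon (completeBipartiteGraph (Fin m) (Fin n)) = m * n * (m + n - 2) / 2 := by
  rw [epsilon_completeBipartiteGraph, Fintype.card_fin, Fintype.card_fin,
    Nat.mul_choose_two_add_mul_choose_two]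

open scoped Classical in
theorem edge_count_complete_bipartite (m n : ℕ) (hm : 1 ≤ m) (hn : 1 ≤ n)
    (hmn : 3 ≤ m + n) :
    epsilon (completeBipartiteGraph (Fin m) (Fin n)) = m * n * (m + n - 2) / 2 :=
  edge_count_complete_bipartite_general m n
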